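/- Let (x̄,σ̄) ∈ ℝⁿ × ℝᵐ be a critical point of the Lagrangian L, i.e., A(σ̄)x̄ = b(σ̄) and q_j(x̄) = 0 for all j = 1,…,m. Then x̄ ∈ X_e, σ̄ ∈ Y_col, and q₀(x̄) = L(x̄,σ̄) = D_L(σ̄). Moreover: if A(σ̄) is positive semidefinite, then σ̄ ∈ Y_col⁺ and q₀(x̄) = inf_{x ∈ X_e} q₀(x) = L(x̄,σ̄) = sup_{σ ∈ Y_col⁺} D_L(σ) = D_L(σ̄); if A(σ̄) is negative semidefinite, then σ̄ ∈ Y_col⁻ and q₀(x̄) = sup_{x ∈ X_e} q₀(x) = L(x̄,σ̄) = inf_{σ ∈ Y_col⁻} D_L(σ) = D_L(σ̄). -/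

import Mathlib

open Matrix Set

noncomputable section

/-- The quadratic function `x ↦ ½⟨x, A x⟩ − ⟨b, x⟩ + c`. -/
def qf {n : ℕ} (A : Matrix (Fin n) (Fin n) ℝ) (b : Fin n → ℝ) (c : ℝ) (x : Fin n → ℝ) : ℝ :=
  (1 / 2 : ℝ) * (x ⬝ᵥ A.mulVec x) - b ⬝ᵥ x + c

/-- `A(σ) = A₀ + Σ σ_k A_k`. -/
def Amat {n m : ℕ} (A0 : Matrix (Fin n) (Fin n) ℝ) (A : Fin m → Matrix (Fin n) (Fin n) ℝ)
    (σ : Fin m → ℝ) : Matrix (Fin n) (Fin n) ℝ :=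
  A0 + ∑ k, σ k • A k

/-- `b(σ) = b₀ + Σ σ_k b_k`. -/
def bvec {n m : ℕ} (b0 : Fin n → ℝ) (b : Fin m → Fin n → ℝ) (σ : Fin m → ℝ) : Fin n → ℝ :=
  b0 + ∑ k, σ k • b k

/-- `q(x) = (q₁(x), …, q_m(x))`. -/
def qvec {n m : ℕ} (A : Fin m → Matrix (Fin n) (Fin n) ℝ) (b : Fin m → Fin n → ℝ)
    (c : Fin m → ℝ) (x : Fin n → ℝ) : Fin m → ℝ :=
  fun i => qf (A i) (b i) (c i) x

/-- Subdifferential of an (extended-real-valued) convex function represented by its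
finite part `V` and its effective domain `dV`; it is empty outside `dV`. -/
def subdiff {m : ℕ} (V : (Fin m → ℝ) → ℝ) (dV : Set (Fin m → ℝ)) (y : Fin m → ℝ) :
    Set (Fin m → ℝ) :=
  {σ | y ∈ dV ∧ ∀ y' ∈ dV, (y' - y) ⬝ᵥ σ ≤ V y' - V y}

/-- `V ∈ Γ(ℝᵐ)`: proper, convex and lower semicontinuous (closed epigraph), where the
extended-real-valued function is represented by its finite part `V` on its domain `dV`. -/
def properLscConvex {m : ℕ} (V : (Fin m → ℝ) → ℝ) (dV : Set (Fin m → ℝ)) : Prop :=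
  dV.Nonempty ∧ ConvexOn ℝ dV V ∧
    IsClosed {p : (Fin m → ℝ) × ℝ | p.1 ∈ dV ∧ V p.1 ≤ p.2}

/-- `(Vs, dVs)` is the Fenchel conjugate of `(V, dV)`:
`dVs` is the set where the supremum is finite and `Vs` its value there. -/
def isConjugate {m : ℕ} (V : (Fin m → ℝ) → ℝ) (dV : Set (Fin m → ℝ))
    (Vs : (Fin m → ℝ) → ℝ) (dVs : Set (Fin m → ℝ)) : Prop :=
  dVs = {σ | BddAbove ((fun y => y ⬝ᵥ σ - V y) '' dV)} ∧
    ∀ σ ∈ dVs, Vs σ = sSup ((fun y => y ⬝ᵥ σ - V y) '' dV)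

/-- The continuous linear functional `v ↦ ⟨g, v⟩`. -/
def dotCLM {k : ℕ} (g : Fin k → ℝ) : (Fin k → ℝ) →L[ℝ] ℝ :=
  LinearMap.toContinuousLinearMap
    { toFun := fun v => g ⬝ᵥ v
      map_add' := fun u v => by simp [dotProduct_add]
      map_smul' := fun t v => by simp [dotProduct_smul, smul_eq_mul] }

/-- The continuous linear map `v ↦ M v`. -/
def matCLM {k l : ℕ} (M : Matrix (Fin l) (Fin k) ℝ) : (Fin k → ℝ) →L[ℝ] (Fin l → ℝ) :=
  LinearMap.toContinuousLinearMap M.mulVecLin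

/-! The Lagrangian is itself a quadratic in `x`: `L(x, σ) = ½⟨x, A(σ)x⟩ − ⟨b(σ), x⟩ + ⟨c, σ⟩`.
Hence if `A(σ)x = b(σ)` then `L(y, σ) − L(x, σ) = ½⟨y − x, A(σ)(y − x)⟩`, so `x` minimizes
`L(·, σ)` when `A(σ) ⪰ 0` and maximizes it when `A(σ) ⪯ 0`. On `X_e` the Lagrangian is `q₀`,
which gives the extremality of `x̄` on `X_e`; and for `σ ∈ Y_col⁺` with `A(σ)x = b(σ)`,
`D_L(σ) = L(x, σ) ≤ L(x̄, σ) = q₀(x̄) = D_L(σ̄)` (reversed on `Y_col⁻`). -/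

variable {n m : ℕ}

lemma qf_sub_qf_of_mulVec_eq {M : Matrix (Fin n) (Fin n) ℝ} (hM : M.IsSymm) {b x : Fin n → ℝ}
    (hx : M *ᵥ x = b) (c : ℝ) (y : Fin n → ℝ) :
    qf M b c y - qf M b c x = (1 / 2 : ℝ) * ((y - x) ⬝ᵥ M *ᵥ (y - x)) := by
  subst hx
  have hxy : x ⬝ᵥ M *ᵥ y = y ⬝ᵥ M *ᵥ x := by
    rw [dotProduct_mulVec, ← mulVec_transpose, hM.eq, dotProduct_comm]
  simp only [qf, mulVec_sub, dotProduct_sub, sub_dotProduct, dotProduct_comm (M *ᵥ x)]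
  linarith

lemma qf_le_qf_of_posSemidef {M : Matrix (Fin n) (Fin n) ℝ} (hM : M.PosSemidef)
    {b x : Fin n → ℝ} (hx : M *ᵥ x = b) (c : ℝ) (y : Fin n → ℝ) : qf M b c x ≤ qf M b c y := by
  have hquad : 0 ≤ (y - x) ⬝ᵥ M *ᵥ (y - x) := by
    simpa using hM.dotProduct_mulVec_nonneg (y - x)
  have := qf_sub_qf_of_mulVec_eq (isHermitian_iff_isSymm.mp hM.isHermitian) hx c y
  linarith

lemma qf_neg (M : Matrix (Fin n) (Fin n) ℝ) (b : Fin n → ℝ) (c : ℝ) (x : Fin n → ℝ) :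
    qf (-M) (-b) (-c) x = -qf M b c x := by
  simp only [qf, neg_mulVec, dotProduct_neg, neg_dotProduct]
  ring

lemma qf_le_qf_of_negSemidef {M : Matrix (Fin n) (Fin n) ℝ} (hM : (-M).PosSemidef)
    {b x : Fin n → ℝ} (hx : M *ᵥ x = b) (c : ℝ) (y : Fin n → ℝ) : qf M b c y ≤ qf M b c x := by
  have := qf_le_qf_of_posSemidef hM (b := -b) (by rw [neg_mulVec, hx]) (-c) y
  rwa [qf_neg, qf_neg, neg_le_neg_iff] at this

section Lagrangian

variable (A0 : Matrix (Fin n) (Fin n) ℝ) (A : Fin m → Matrix (Fin n) (Fin n) ℝ)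
  (b0 : Fin n → ℝ) (b : Fin m → Fin n → ℝ) (c : Fin m → ℝ)

lemma lagrangian_eq_qf (σ : Fin m → ℝ) (x : Fin n → ℝ) :
    qf A0 b0 0 x + qvec A b c x ⬝ᵥ σ = qf (Amat A0 A σ) (bvec b0 b σ) (c ⬝ᵥ σ) x := by
  have hq : qvec A b c x ⬝ᵥ σ = ∑ k, σ k * qf (A k) (b k) (c k) x :=
    dotProduct_comm _ _
  have hc : c ⬝ᵥ σ = ∑ k, σ k * c k := dotProduct_comm _ _
  simp only [hq, hc, qf, Amat, bvec, add_mulVec, sum_mulVec, smul_mulVec, dotProduct_add,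
    add_dotProduct, dotProduct_sum, sum_dotProduct, dotProduct_smul, smul_dotProduct,
    smul_eq_mul, Finset.mul_sum, mul_add, mul_sub, Finset.sum_add_distrib, Finset.sum_sub_distrib]
  ring_nf

variable {A0 A b0 b c}

lemma lagrangian_le_of_posSemidef {σ : Fin m → ℝ} (hσ : (Amat A0 A σ).PosSemidef)
    {x : Fin n → ℝ} (hx : Amat A0 A σ *ᵥ x = bvec b0 b σ) (y : Fin n → ℝ) :
    qf A0 b0 0 x + qvec A b c x ⬝ᵥ σ ≤ qf A0 b0 0 y + qvec A b c y ⬝ᵥ σ := by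
  simpa only [lagrangian_eq_qf] using qf_le_qf_of_posSemidef hσ hx (c ⬝ᵥ σ) y

lemma lagrangian_le_of_negSemidef {σ : Fin m → ℝ} (hσ : (-Amat A0 A σ).PosSemidef)
    {x : Fin n → ℝ} (hx : Amat A0 A σ *ᵥ x = bvec b0 b σ) (y : Fin n → ℝ) :
    qf A0 b0 0 y + qvec A b c y ⬝ᵥ σ ≤ qf A0 b0 0 x + qvec A b c x ⬝ᵥ σ := by
  simpa only [lagrangian_eq_qf] using qf_le_qf_of_negSemidef hσ hx (c ⬝ᵥ σ) y

lemma lagrangian_eq_of_feasible {x : Fin n → ℝ} (hx : ∀ j, qf (A j) (b j) (c j) x = 0)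
    (σ : Fin m → ℝ) : qf A0 b0 0 x + qvec A b c x ⬝ᵥ σ = qf A0 b0 0 x := by
  rw [show qvec A b c x = 0 from funext hx, zero_dotProduct, add_zero]

end Lagrangian

theorem statement9_general {n m : ℕ}
    (A0 : Matrix (Fin n) (Fin n) ℝ) (A : Fin m → Matrix (Fin n) (Fin n) ℝ)
    (b0 : Fin n → ℝ) (b : Fin m → Fin n → ℝ) (c : Fin m → ℝ)
    (DL : (Fin m → ℝ) → ℝ)
    (hDL : ∀ σ, bvec b0 b σ ∈ Set.range (Amat A0 A σ).mulVec →
      ∀ x, Amat A0 A σ *ᵥ x = bvec b0 b σ →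
        DL σ = qf A0 b0 0 x + qvec A b c x ⬝ᵥ σ)
    (xb : Fin n → ℝ) (σb : Fin m → ℝ)
    (hstat : Amat A0 A σb *ᵥ xb = bvec b0 b σb)
    (hq0 : ∀ j, qf (A j) (b j) (c j) xb = 0) :
    xb ∈ {x | ∀ j, qf (A j) (b j) (c j) x = 0} ∧
    bvec b0 b σb ∈ Set.range (Amat A0 A σb).mulVec ∧
    qf A0 b0 0 xb = qf A0 b0 0 xb + qvec A b c xb ⬝ᵥ σb ∧
    qf A0 b0 0 xb + qvec A b c xb ⬝ᵥ σb = DL σb ∧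
    ((Amat A0 A σb).PosSemidef →
      (∀ x, (∀ j, qf (A j) (b j) (c j) x = 0) → qf A0 b0 0 xb ≤ qf A0 b0 0 x) ∧
      (∀ σ, bvec b0 b σ ∈ Set.range (Amat A0 A σ).mulVec →
        (Amat A0 A σ).PosSemidef → DL σ ≤ DL σb)) ∧
    ((-(Amat A0 A σb)).PosSemidef →
      (∀ x, (∀ j, qf (A j) (b j) (c j) x = 0) → qf A0 b0 0 x ≤ qf A0 b0 0 xb) ∧
      (∀ σ, bvec b0 b σ ∈ Set.range (Amat A0 A σ).mulVec →
        (-(Amat A0 A σ)).PosSemidef → DL σb ≤ DL σ)) := by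
  have hD : ∀ σ x, Amat A0 A σ *ᵥ x = bvec b0 b σ → DL σ = qf A0 b0 0 x + qvec A b c x ⬝ᵥ σ :=
    fun σ x hx => hDL σ ⟨x, hx⟩ x hx
  have hL := lagrangian_eq_of_feasible (A0 := A0) (b0 := b0) hq0
  refine ⟨hq0, ⟨xb, hstat⟩, (hL σb).symm, (hD σb xb hstat).symm, fun hpsd => ⟨?_, ?_⟩,
    fun hnsd => ⟨?_, ?_⟩⟩
  · intro x hx
    simpa only [hL, lagrangian_eq_of_feasible hx] using
      lagrangian_le_of_posSemidef (c := c) hpsd hstat x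
  · rintro σ ⟨x, hx⟩ hσ
    calc DL σ = qf A0 b0 0 x + qvec A b c x ⬝ᵥ σ := hD σ x hx
      _ ≤ qf A0 b0 0 xb + qvec A b c xb ⬝ᵥ σ := lagrangian_le_of_posSemidef hσ hx xb
      _ = DL σb := by rw [hL, ← hL σb, hD σb xb hstat]
  · intro x hx
    simpa only [hL, lagrangian_eq_of_feasible hx] using
      lagrangian_le_of_negSemidef (c := c) hnsd hstat x
  · rintro σ ⟨x, hx⟩ hσ
    calc DL σb = qf A0 b0 0 xb + qvec A b c xb ⬝ᵥ σ := by rw [hL, ← hL σb, hD σb xb hstat]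
      _ ≤ qf A0 b0 0 x + qvec A b c x ⬝ᵥ σ := lagrangian_le_of_negSemidef hσ hx xb
      _ = DL σ := (hD σ x hx).symm

/-- If `(x̄,σ̄)` is a critical point of the Lagrangian `L` (i.e.
`A(σ̄)x̄ = b(σ̄)` and `q(x̄) = 0`), then `x̄ ∈ X_e`, `σ̄ ∈ Y_col` and
`q₀(x̄) = L(x̄,σ̄) = D_L(σ̄)`; if `A(σ̄) ⪰ 0` then
`q₀(x̄) = inf_{X_e} q₀ = sup_{Y_col⁺} D_L = D_L(σ̄)`, and if `A(σ̄) ⪯ 0` then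
`q₀(x̄) = sup_{X_e} q₀ = inf_{Y_col⁻} D_L = D_L(σ̄)`. -/
theorem statement9 {n m : ℕ}
    (A0 : Matrix (Fin n) (Fin n) ℝ) (A : Fin m → Matrix (Fin n) (Fin n) ℝ)
    (b0 : Fin n → ℝ) (b : Fin m → Fin n → ℝ) (c : Fin m → ℝ)
    (hA0 : A0.IsSymm) (hA : ∀ i, (A i).IsSymm)
    (DL : (Fin m → ℝ) → ℝ)
    (hDL : ∀ σ, bvec b0 b σ ∈ Set.range (Amat A0 A σ).mulVec →
      ∀ x, Amat A0 A σ *ᵥ x = bvec b0 b σ →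
        DL σ = qf A0 b0 0 x + qvec A b c x ⬝ᵥ σ)
    (xb : Fin n → ℝ) (σb : Fin m → ℝ)
    (hstat : Amat A0 A σb *ᵥ xb = bvec b0 b σb)
    (hq0 : ∀ j, qf (A j) (b j) (c j) xb = 0) :
    xb ∈ {x | ∀ j, qf (A j) (b j) (c j) x = 0} ∧
    bvec b0 b σb ∈ Set.range (Amat A0 A σb).mulVec ∧
    qf A0 b0 0 xb = qf A0 b0 0 xb + qvec A b c xb ⬝ᵥ σb ∧
    qf A0 b0 0 xb + qvec A b c xb ⬝ᵥ σb = DL σb ∧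
    ((Amat A0 A σb).PosSemidef →
      (∀ x, (∀ j, qf (A j) (b j) (c j) x = 0) → qf A0 b0 0 xb ≤ qf A0 b0 0 x) ∧
      (∀ σ, bvec b0 b σ ∈ Set.range (Amat A0 A σ).mulVec →
        (Amat A0 A σ).PosSemidef → DL σ ≤ DL σb)) ∧
    ((-(Amat A0 A σb)).PosSemidef →
      (∀ x, (∀ j, qf (A j) (b j) (c j) x = 0) → qf A0 b0 0 x ≤ qf A0 b0 0 xb) ∧
      (∀ σ, bvec b0 b σ ∈ Set.range (Amat A0 A σ).mulVec →
        (-(Amat A0 A σ)).PosSemidef → DL σb ≤ DL σ)) :=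
  statement9_general A0 A b0 b c DL hDL xb σb hstat hq0
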